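/- arXiv:1010.1601 — 2 statements merged into one kernel-verified Lean document; each statement's English description precedes it below -/
import Mathlib

section
/- Let G be an n×M real matrix, Δ an M×M symmetric matrix, and J ⊂ {1,…,M}. Write Δ_J for the M×M matrix that agrees with Δ on rows and columns indexed by J and is zero elsewhere, and similarly Δ_{J^c} for the complement. Then tr(GΔ_J Gᵀ G Δ_{J^c} Gᵀ) ≥ -θ(G) ρ_max(GᵀG) · (Σ_{i∈J} ‖(Δ_J)_i‖₂)(Σ_{j∈J^c} ‖(Δ_{J^c})_j‖₂), where (Δ_J)_i denotes the i-th column of Δ_J, θ(G) the mutual coherence of G, and ρ_max(GᵀG) its largest eigenvalue. -/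
open Matrix

/-- Euclidean norm of the `k`-th column of a matrix. -/
noncomputable def colNorm {n m : ℕ} (A : Matrix (Fin n) (Fin m) ℝ) (k : Fin m) : ℝ :=
  Real.sqrt (∑ i, (A i k) ^ 2)

/-- Mutual coherence of the columns of `G`. -/
noncomputable def coherence {n M : ℕ} (G : Matrix (Fin n) (Fin M) ℝ) : ℝ :=
  sSup {x : ℝ | ∃ k k' : Fin M, k ≠ k' ∧ x = |∑ i, G i k' * G i k|}

/-- `ρ_max(GᵀG)`: the largest eigenvalue of `GᵀG`, as supremum of the Rayleigh quotient. -/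
noncomputable def rhoMaxGram {n M : ℕ} (G : Matrix (Fin n) (Fin M) ℝ) : ℝ :=
  sSup {r : ℝ | ∃ β : Fin M → ℝ, ∑ k, (β k) ^ 2 = 1 ∧ r = ∑ i, (∑ k, G i k * β k) ^ 2}

lemma gram_bddAbove {n M : ℕ} (G : Matrix (Fin n) (Fin M) ℝ) :
    BddAbove {r : ℝ | ∃ β : Fin M → ℝ, ∑ k, (β k) ^ 2 = 1 ∧ r = ∑ i, (∑ k, G i k * β k) ^ 2} := by
  refine ⟨∑ i, ∑ k, (G i k) ^ 2, ?_⟩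
  rintro r ⟨β, hβ, rfl⟩
  refine Finset.sum_le_sum fun i _ => ?_
  calc (∑ k, G i k * β k) ^ 2 ≤ (∑ k, (G i k) ^ 2) * ∑ k, (β k) ^ 2 :=
        Finset.sum_mul_sq_le_sq_mul_sq _ _ _
    _ = ∑ k, (G i k) ^ 2 := by rw [hβ, mul_one]

lemma rho_nonneg {n M : ℕ} (G : Matrix (Fin n) (Fin M) ℝ) : 0 ≤ rhoMaxGram G := by
  rcases Nat.eq_zero_or_pos M with hM | hM
  · subst hM
    have h : {r : ℝ | ∃ β : Fin 0 → ℝ, ∑ k, (β k) ^ 2 = 1 ∧ r = ∑ i, (∑ k, G i k * β k) ^ 2}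
        = ∅ := by
      ext r; simp
    rw [rhoMaxGram, h, Real.sSup_empty]
  · haveI : NeZero M := ⟨hM.ne'⟩
    have hβ : ∑ k : Fin M, ((fun k : Fin M => if k = 0 then (1 : ℝ) else 0) k) ^ 2 = 1 := by
      simp
    have hmem : (∑ i, (∑ k, G i k * (fun k : Fin M => if k = 0 then (1 : ℝ) else 0) k) ^ 2) ∈
        {r : ℝ | ∃ β : Fin M → ℝ, ∑ k, (β k) ^ 2 = 1 ∧ r = ∑ i, (∑ k, G i k * β k) ^ 2} :=
      ⟨_, hβ, rfl⟩
    refine le_trans ?_ (le_csSup (gram_bddAbove G) hmem)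
    positivity

lemma sum_sq_mulVec_le {n M : ℕ} (G : Matrix (Fin n) (Fin M) ℝ) (u : Fin M → ℝ) :
    ∑ i, (∑ k, G i k * u k) ^ 2 ≤ rhoMaxGram G * ∑ k, (u k) ^ 2 := by
  by_cases hu : ∑ k, (u k) ^ 2 = 0
  · have hz : ∀ k, u k = 0 := by
      intro k
      have h := (Finset.sum_eq_zero_iff_of_nonneg
        (fun k _ => sq_nonneg (u k))).1 hu k (Finset.mem_univ k)
      exact (pow_eq_zero_iff (two_ne_zero)).mp h
    simp [hz, hu]
  · have hpos : 0 < ∑ k, (u k) ^ 2 :=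
      lt_of_le_of_ne (Finset.sum_nonneg fun k _ => sq_nonneg _) (Ne.symm hu)
    set c : ℝ := Real.sqrt (∑ k, (u k) ^ 2) with hc
    have hc0 : 0 < c := Real.sqrt_pos.2 hpos
    have hc2 : c ^ 2 = ∑ k, (u k) ^ 2 := Real.sq_sqrt hpos.le
    have hβ : ∑ k, (u k / c) ^ 2 = 1 := by
      simp_rw [div_pow]
      rw [← Finset.sum_div, ← hc2, div_self (by positivity)]
    have hmem : (∑ i, (∑ k, G i k * (u k / c)) ^ 2) ∈
        {r : ℝ | ∃ β : Fin M → ℝ, ∑ k, (β k) ^ 2 = 1 ∧ r = ∑ i, (∑ k, G i k * β k) ^ 2} :=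
      ⟨fun k => u k / c, hβ, rfl⟩
    have hle : (∑ i, (∑ k, G i k * (u k / c)) ^ 2) ≤ rhoMaxGram G :=
      le_csSup (gram_bddAbove G) hmem
    have hrw : ∑ i, (∑ k, G i k * (u k / c)) ^ 2 = (∑ i, (∑ k, G i k * u k) ^ 2) / c ^ 2 := by
      rw [Finset.sum_div]
      refine Finset.sum_congr rfl fun i _ => ?_
      rw [← div_pow]
      congr 1
      rw [Finset.sum_div]
      exact Finset.sum_congr rfl fun k _ => (mul_div_assoc _ _ _).symm
    rw [hrw, div_le_iff₀ (by positivity)] at hle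
    calc ∑ i, (∑ k, G i k * u k) ^ 2 ≤ rhoMaxGram G * c ^ 2 := hle
      _ = rhoMaxGram G * ∑ k, (u k) ^ 2 := by rw [hc2]

lemma abs_cross_le {n M : ℕ} (G : Matrix (Fin n) (Fin M) ℝ) (u v : Fin M → ℝ) :
    |∑ i, (∑ k, G i k * u k) * (∑ k, G i k * v k)| ≤
      rhoMaxGram G * (Real.sqrt (∑ k, (u k) ^ 2) * Real.sqrt (∑ k, (v k) ^ 2)) := by
  have hρ := rho_nonneg G
  have h1 : Real.sqrt (∑ i, (∑ k, G i k * u k) ^ 2) ≤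
      Real.sqrt (rhoMaxGram G) * Real.sqrt (∑ k, (u k) ^ 2) := by
    rw [← Real.sqrt_mul hρ]
    exact Real.sqrt_le_sqrt (sum_sq_mulVec_le G u)
  have h2 : Real.sqrt (∑ i, (∑ k, G i k * v k) ^ 2) ≤
      Real.sqrt (rhoMaxGram G) * Real.sqrt (∑ k, (v k) ^ 2) := by
    rw [← Real.sqrt_mul hρ]
    exact Real.sqrt_le_sqrt (sum_sq_mulVec_le G v)
  have hCS : |∑ i, (∑ k, G i k * u k) * (∑ k, G i k * v k)| ≤
      Real.sqrt (∑ i, (∑ k, G i k * u k) ^ 2) * Real.sqrt (∑ i, (∑ k, G i k * v k) ^ 2) := by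
    rw [← Real.sqrt_sq_eq_abs, ← Real.sqrt_mul (Finset.sum_nonneg fun i _ => sq_nonneg _)]
    exact Real.sqrt_le_sqrt (Finset.sum_mul_sq_le_sq_mul_sq _ _ _)
  calc |∑ i, (∑ k, G i k * u k) * (∑ k, G i k * v k)|
      ≤ Real.sqrt (∑ i, (∑ k, G i k * u k) ^ 2) *
        Real.sqrt (∑ i, (∑ k, G i k * v k) ^ 2) := hCS
    _ ≤ (Real.sqrt (rhoMaxGram G) * Real.sqrt (∑ k, (u k) ^ 2)) *
        (Real.sqrt (rhoMaxGram G) * Real.sqrt (∑ k, (v k) ^ 2)) :=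
        mul_le_mul h1 h2 (Real.sqrt_nonneg _) (by positivity)
    _ = (Real.sqrt (rhoMaxGram G) * Real.sqrt (rhoMaxGram G)) *
        (Real.sqrt (∑ k, (u k) ^ 2) * Real.sqrt (∑ k, (v k) ^ 2)) := by ring
    _ = rhoMaxGram G * (Real.sqrt (∑ k, (u k) ^ 2) * Real.sqrt (∑ k, (v k) ^ 2)) := by
        rw [Real.mul_self_sqrt hρ]

lemma abs_dot_le_coherence {n M : ℕ} (G : Matrix (Fin n) (Fin M) ℝ) {k k' : Fin M}
    (h : k ≠ k') : |∑ i, G i k' * G i k| ≤ coherence G := by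
  have hb : BddAbove {x : ℝ | ∃ k k' : Fin M, k ≠ k' ∧ x = |∑ i, G i k' * G i k|} := by
    apply Set.Finite.bddAbove
    have hsub : {x : ℝ | ∃ k k' : Fin M, k ≠ k' ∧ x = |∑ i, G i k' * G i k|} ⊆
        Set.range (fun p : Fin M × Fin M => |∑ i, G i p.2 * G i p.1|) := by
      rintro x ⟨a, b, _, rfl⟩; exact ⟨(a, b), rfl⟩
    exact (Set.finite_range _).subset hsub
  exact le_csSup hb ⟨k, k', h, rfl⟩

lemma trace_transpose_mul_eq_sum {M : ℕ} (X Y : Matrix (Fin M) (Fin M) ℝ) :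
    Matrix.trace (Xᵀ * Y) = ∑ i, ∑ j, X i j * Y i j := by
  rw [Matrix.trace]
  simp only [Matrix.diag_apply, Matrix.mul_apply, Matrix.transpose_apply]
  exact Finset.sum_comm

/-- lower bound for the cross trace term
`tr(GΔ_J Gᵀ G Δ_{J^c} Gᵀ)` in terms of the coherence and the column norms. -/
theorem trace_cross_term_ge {n M : ℕ} (G : Matrix (Fin n) (Fin M) ℝ)
    (Δ : Matrix (Fin M) (Fin M) ℝ) (hΔ : Δ.IsSymm) (J : Finset (Fin M))
    (ΔJ ΔJc : Matrix (Fin M) (Fin M) ℝ)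
    (hΔJ : ∀ i j, ΔJ i j = if i ∈ J ∧ j ∈ J then Δ i j else 0)
    (hΔJc : ∀ i j, ΔJc i j = if i ∉ J ∧ j ∉ J then Δ i j else 0) :
    -(coherence G * rhoMaxGram G) *
        ((∑ i ∈ J, colNorm ΔJ i) * (∑ j ∈ Jᶜ, colNorm ΔJc j)) ≤
      Matrix.trace (G * ΔJ * Gᵀ * (G * ΔJc * Gᵀ)) := by
  have hΔJs : ΔJᵀ = ΔJ := by
    ext i j
    rcases Classical.em (i ∈ J) with hi | hi <;> rcases Classical.em (j ∈ J) with hj | hj <;>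
      simp [hΔJ, hi, hj, hΔ.apply]
  -- the key trace identity
  have key : Matrix.trace (G * ΔJ * Gᵀ * (G * ΔJc * Gᵀ)) =
      ∑ i, ∑ j, (Gᵀ * G) i j * (((G * ΔJ)ᵀ * (G * ΔJc)) i j) := by
    rw [← trace_transpose_mul_eq_sum]
    rw [Matrix.transpose_mul, Matrix.transpose_transpose, Matrix.transpose_mul, hΔJs]
    rw [show G * ΔJ * Gᵀ * (G * ΔJc * Gᵀ) = (G * ΔJ * Gᵀ * (G * ΔJc)) * Gᵀ by
      simp only [Matrix.mul_assoc]]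
    rw [Matrix.trace_mul_comm]
    simp only [Matrix.mul_assoc]
  -- vanishing of entries
  have hC1 : ∀ i j : Fin M, i ∉ J → ((G * ΔJ)ᵀ * (G * ΔJc)) i j = 0 := by
    intro i j hi
    rw [Matrix.mul_apply]
    refine Finset.sum_eq_zero fun t _ => ?_
    rw [Matrix.transpose_apply, Matrix.mul_apply]
    have hz : ∀ p, ΔJ p i = 0 := fun p => by simp [hΔJ, hi]
    simp [hz]
  have hC2 : ∀ i j : Fin M, j ∈ J → ((G * ΔJ)ᵀ * (G * ΔJc)) i j = 0 := by
    intro i j hj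
    rw [Matrix.mul_apply]
    refine Finset.sum_eq_zero fun t _ => ?_
    have hz : ∀ q, ΔJc q j = 0 := fun q => by simp [hΔJc, hj]
    rw [Matrix.mul_apply (M := G)]
    simp [hz]
  have hrestrict : (∑ i, ∑ j, (Gᵀ * G) i j * (((G * ΔJ)ᵀ * (G * ΔJc)) i j)) =
      ∑ i ∈ J, ∑ j ∈ Jᶜ, (Gᵀ * G) i j * (((G * ΔJ)ᵀ * (G * ΔJc)) i j) := by
    rw [← Finset.sum_subset (Finset.subset_univ J)
      (fun i _ hi => Finset.sum_eq_zero fun j _ => by rw [hC1 i j hi, mul_zero])]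
    refine Finset.sum_congr rfl fun i _ => ?_
    rw [← Finset.sum_subset (Finset.subset_univ Jᶜ)
      (fun j _ hj => by rw [hC2 i j (by simpa using hj), mul_zero])]
  rw [key, hrestrict]
  -- termwise bound
  have hterm : ∀ i ∈ J, ∀ j ∈ Jᶜ,
      -((coherence G * rhoMaxGram G) * (colNorm ΔJ i * colNorm ΔJc j)) ≤
        (Gᵀ * G) i j * (((G * ΔJ)ᵀ * (G * ΔJc)) i j) := by
    intro i hi j hj
    have hjJ : j ∉ J := by simpa using hj
    have hij : j ≠ i := fun h => hjJ (h ▸ hi)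
    have hB : |(Gᵀ * G) i j| ≤ coherence G := by
      have : (Gᵀ * G) i j = ∑ t, G t i * G t j := by
        simp [Matrix.mul_apply, Matrix.transpose_apply]
      rw [this]
      exact abs_dot_le_coherence G hij
    have hCval : ((G * ΔJ)ᵀ * (G * ΔJc)) i j =
        ∑ t, (∑ p, G t p * ΔJ p i) * (∑ q, G t q * ΔJc q j) := by
      simp only [Matrix.mul_apply, Matrix.transpose_apply]
    have hC : |((G * ΔJ)ᵀ * (G * ΔJc)) i j| ≤
        rhoMaxGram G * (colNorm ΔJ i * colNorm ΔJc j) := by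
      rw [hCval]
      exact abs_cross_le G (fun p => ΔJ p i) (fun q => ΔJc q j)
    have habs : |(Gᵀ * G) i j * (((G * ΔJ)ᵀ * (G * ΔJc)) i j)| ≤
        coherence G * (rhoMaxGram G * (colNorm ΔJ i * colNorm ΔJc j)) := by
      rw [abs_mul]
      exact mul_le_mul hB hC (abs_nonneg _) ((abs_nonneg _).trans hB)
    have hneg := neg_abs_le ((Gᵀ * G) i j * (((G * ΔJ)ᵀ * (G * ΔJc)) i j))
    nlinarith [habs, hneg]
  calc -(coherence G * rhoMaxGram G) * ((∑ i ∈ J, colNorm ΔJ i) * (∑ j ∈ Jᶜ, colNorm ΔJc j))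
      = ∑ i ∈ J, ∑ j ∈ Jᶜ,
          -((coherence G * rhoMaxGram G) * (colNorm ΔJ i * colNorm ΔJc j)) := by
        rw [Finset.sum_mul_sum, Finset.mul_sum]
        refine Finset.sum_congr rfl fun i _ => ?_
        rw [Finset.mul_sum]
        exact Finset.sum_congr rfl fun j _ => by ring
    _ ≤ ∑ i ∈ J, ∑ j ∈ Jᶜ, (Gᵀ * G) i j * (((G * ΔJ)ᵀ * (G * ΔJc)) i j) :=
        Finset.sum_le_sum fun i hi => Finset.sum_le_sum fun j hj => hterm i hi j hj
end

section
/- Let G be an n×M real matrix, J ⊂ {1,…,M} with |J| ≤ s ≤ min(n,M), and let Δ_J be an M×M symmetric matrix whose rows and columns vanish outside J. Then ‖G Δ_J Gᵀ‖_F² ≥ ρ_min(s)² ‖Δ_J‖_F², where ρ_min(s) is the infimum over index sets J' with |J'| ≤ s of the smallest eigenvalue of G_{J'}ᵀG_{J'}. -/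
open Matrix

/-- Squared Frobenius norm of a real matrix. -/
noncomputable def frobSq {n m : ℕ} (A : Matrix (Fin n) (Fin m) ℝ) : ℝ :=
  ∑ i, ∑ j, (A i j) ^ 2

/-- `ρ_min(s)`: infimum of the Rayleigh quotient of `GᵀG` over unit vectors supported on
sets of cardinality at most `s`. -/
noncomputable def rhoMin {n M : ℕ} (G : Matrix (Fin n) (Fin M) ℝ) (s : ℕ) : ℝ :=
  sInf {r : ℝ | ∃ (J : Finset (Fin M)) (β : Fin M → ℝ), J.card ≤ s ∧
    (∀ k ∉ J, β k = 0) ∧ ∑ k, (β k) ^ 2 = 1 ∧ r = ∑ i, (∑ k, G i k * β k) ^ 2}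

lemma rhoMin_nonneg {n M : ℕ} (G : Matrix (Fin n) (Fin M) ℝ) (s : ℕ) :
    0 ≤ rhoMin G s := by
  apply Real.sInf_nonneg
  rintro r ⟨J, β, -, -, -, rfl⟩
  positivity

lemma rhoMin_key {n M : ℕ} (G : Matrix (Fin n) (Fin M) ℝ) (s : ℕ)
    (J : Finset (Fin M)) (hJ : J.card ≤ s) (β : Fin M → ℝ) (hβ : ∀ k ∉ J, β k = 0) :
    rhoMin G s * ∑ k, (β k) ^ 2 ≤ ∑ i, (∑ k, G i k * β k) ^ 2 := by
  set c : ℝ := ∑ k, (β k) ^ 2 with hc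
  have hc0 : 0 ≤ c := by positivity
  rcases eq_or_lt_of_le hc0 with h0 | hpos
  · have hz : ∀ k, β k = 0 := by
      intro k
      have := (Finset.sum_eq_zero_iff_of_nonneg (fun k _ => sq_nonneg (β k))).mp h0.symm
      have hk := this k (Finset.mem_univ k)
      exact pow_eq_zero_iff (n := 2) (by norm_num) |>.mp hk
    rw [← h0]
    simp [hz]
  · have hsc : Real.sqrt c > 0 := Real.sqrt_pos.mpr hpos
    set β' : Fin M → ℝ := fun k => β k / Real.sqrt c with hβ'
    have hsum1 : ∑ k, (β' k) ^ 2 = 1 := by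
      simp only [hβ', div_pow]
      rw [← Finset.sum_div, ← hc, Real.sq_sqrt hc0, div_self (ne_of_gt hpos)]
    have hmem : (∑ i, (∑ k, G i k * β' k) ^ 2) ∈
        {r : ℝ | ∃ (J : Finset (Fin M)) (β : Fin M → ℝ), J.card ≤ s ∧
          (∀ k ∉ J, β k = 0) ∧ ∑ k, (β k) ^ 2 = 1 ∧
          r = ∑ i, (∑ k, G i k * β k) ^ 2} := by
      exact ⟨J, β', hJ, fun k hk => by simp [hβ', hβ k hk], hsum1, rfl⟩
    have hbdd : BddBelow {r : ℝ | ∃ (J : Finset (Fin M)) (β : Fin M → ℝ), J.card ≤ s ∧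
          (∀ k ∉ J, β k = 0) ∧ ∑ k, (β k) ^ 2 = 1 ∧
          r = ∑ i, (∑ k, G i k * β k) ^ 2} := by
      refine ⟨0, ?_⟩
      rintro r ⟨J, β, -, -, -, rfl⟩
      positivity
    have hle : rhoMin G s ≤ ∑ i, (∑ k, G i k * β' k) ^ 2 := csInf_le hbdd hmem
    have hval : ∑ i, (∑ k, G i k * β' k) ^ 2 = (∑ i, (∑ k, G i k * β k) ^ 2) / c := by
      rw [Finset.sum_div]
      refine Finset.sum_congr rfl fun i _ => ?_
      have : ∑ k, G i k * β' k = (∑ k, G i k * β k) / Real.sqrt c := by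
        rw [Finset.sum_div]
        exact Finset.sum_congr rfl fun k _ => by rw [hβ']; ring
      rw [this, div_pow, Real.sq_sqrt hc0]
    rw [hval] at hle
    calc rhoMin G s * c ≤ ((∑ i, (∑ k, G i k * β k) ^ 2) / c) * c :=
          mul_le_mul_of_nonneg_right hle hc0
      _ = ∑ i, (∑ k, G i k * β k) ^ 2 := div_mul_cancel₀ _ (ne_of_gt hpos)

lemma frobSq_mul_ge {n M p : ℕ} (G : Matrix (Fin n) (Fin M) ℝ) (s : ℕ)
    (J : Finset (Fin M)) (hJ : J.card ≤ s)
    (A : Matrix (Fin M) (Fin p) ℝ) (hA : ∀ k ∉ J, ∀ j, A k j = 0) :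
    rhoMin G s * frobSq A ≤ frobSq (G * A) := by
  unfold frobSq
  rw [Finset.sum_comm (γ := Fin M)]
  rw [Finset.sum_comm (γ := Fin n)]
  rw [Finset.mul_sum]
  apply Finset.sum_le_sum
  intro j _
  have := rhoMin_key G s J hJ (fun k => A k j) (fun k hk => hA k hk j)
  simpa [mul_apply] using this

lemma frobSq_transpose {n m : ℕ} (A : Matrix (Fin n) (Fin m) ℝ) :
    frobSq Aᵀ = frobSq A := by
  unfold frobSq
  rw [Finset.sum_comm]
  rfl

/-- for a symmetric matrix `Δ_J` supported on `J × J` with `|J| ≤ s`,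
`‖G Δ_J Gᵀ‖_F² ≥ ρ_min(s)² ‖Δ_J‖_F²`. -/
theorem frobSq_conj_supported_ge {n M : ℕ} (G : Matrix (Fin n) (Fin M) ℝ)
    (s : ℕ) (hs1 : 1 ≤ s) (hs2 : s ≤ min n M)
    (J : Finset (Fin M)) (hJ : J.card ≤ s)
    (ΔJ : Matrix (Fin M) (Fin M) ℝ) (hsymm : ΔJ.IsSymm)
    (hsupp : ∀ i j, (i ∉ J ∨ j ∉ J) → ΔJ i j = 0) :
    rhoMin G s ^ 2 * frobSq ΔJ ≤ frobSq (G * ΔJ * Gᵀ) := by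
  have hρ : 0 ≤ rhoMin G s := rhoMin_nonneg G s
  -- step 1 : frobSq (G * Δ) ≥ ρ * frobSq Δ
  have h1 : rhoMin G s * frobSq ΔJ ≤ frobSq (G * ΔJ) :=
    frobSq_mul_ge G s J hJ ΔJ (fun k hk j => hsupp k j (Or.inl hk))
  -- step 2 : frobSq (G * (Δ * Gᵀ)) ≥ ρ * frobSq (Δ * Gᵀ)
  have h2 : rhoMin G s * frobSq (ΔJ * Gᵀ) ≤ frobSq (G * (ΔJ * Gᵀ)) := by
    apply frobSq_mul_ge G s J hJ
    intro k hk j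
    rw [mul_apply]
    apply Finset.sum_eq_zero
    intro l _
    rw [hsupp k l (Or.inl hk), zero_mul]
  have htr : frobSq (ΔJ * Gᵀ) = frobSq (G * ΔJ) := by
    rw [← frobSq_transpose (G * ΔJ)]
    congr 1
    rw [transpose_mul, hsymm.eq]
  rw [← Matrix.mul_assoc] at h2
  calc rhoMin G s ^ 2 * frobSq ΔJ = rhoMin G s * (rhoMin G s * frobSq ΔJ) := by ring
    _ ≤ rhoMin G s * frobSq (G * ΔJ) := mul_le_mul_of_nonneg_left h1 hρ
    _ = rhoMin G s * frobSq (ΔJ * Gᵀ) := by rw [htr]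
    _ ≤ frobSq (G * ΔJ * Gᵀ) := h2
end
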